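/- There exist constants C > 0 and r₀ > 1 such that for all r ≥ r₀, |R(r)| ≤ C·ρ(r)^(−2(β+1)/(β+2)). -/

import Mathlib

/-!
Write `y = α + log (1 + r²)`. Once `r ≥ exp α` we have `y ≥ 2α`, so `y^(β+1)/D ∈ [1, 2]`, and the
curvature is `α^β / y^(β+1)` times a fixed polynomial evaluated at `r²/(1+r²)`, `y^(β+1)/D`,
`y/(1+r²)` and `1/y`, which all range over compact intervals; hence `|R| ≲ y^-(β+1)`.
The integrand of `ρ` lies between `(1+t²)^(-1/2)` and `(y(r)/α)^(β/2) (1+t²)^(-1/2)`, whose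
integral is `arsinh r ≤ log 2 + log (1+r²)/2`; hence `0 < ρ ≲ y^((β+2)/2)`, and raising this to the
power `-2(β+1)/(β+2)` gives `y^-(β+1) ≲ ρ^(-2(β+1)/(β+2))`.
-/

open Real

noncomputable def rhoFJ (α β : ℝ) (r : ℝ) : ℝ :=
  ∫ t in (0:ℝ)..r, Real.sqrt ((α + Real.log (1 + t ^ 2)) ^ β / (α ^ β * (1 + t ^ 2)))

/-- The scalar curvature of the metric, restricted to the radial variable `r`. -/
noncomputable def RscalFJ (n : ℕ) (α β : ℝ) (r : ℝ) : ℝ :=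
  let y : ℝ := α + Real.log (1 + r ^ 2)
  let D : ℝ := y ^ (β + 1) - α ^ (β + 1)
  let g11 : ℝ := α ^ β * (1 + r ^ 2) / y ^ β
  let gv : ℝ := (β + 1) * α ^ β * r ^ 2 / D
  let R11 : ℝ := (β / y - 1) / (1 + r ^ 2) ^ 2
    + ((n : ℝ) - 1) * (β + 1) * y ^ β / (D * (1 + r ^ 2))
    - β * r ^ 2 / (y ^ 2 * (1 + r ^ 2) ^ 2)
    + ((n : ℝ) - 1) * (β + 1) * y ^ (β - 1) * (β - y) * r ^ 2 / (D * (1 + r ^ 2) ^ 2)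
    - ((n : ℝ) - 1) * (β + 1) ^ 2 * y ^ (2 * β) * r ^ 2 / (D ^ 2 * (1 + r ^ 2) ^ 2)
  let Rv : ℝ := (β / y - 1) / (1 + r ^ 2) - ((n : ℝ) - 1) / r ^ 2
    + ((n : ℝ) - 1) * (β + 1) * y ^ β / (D * (1 + r ^ 2))
  g11 * R11 + ((n : ℝ) - 1) * gv * Rv

open Set

noncomputable def yFJ (α r : ℝ) : ℝ := α + Real.log (1 + r ^ 2)

/-- With `k = n - 1`, `b = β + 1`, `s = r²/(1+r²)`, `q = y^(β+1)/D`, `w = y/(1+r²)` and `v = 1/y`,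
the scalar curvature is `α^β / y^(β+1) * RscalFJPoly k b β s q w v` (`RscalFJ_eq_RscalFJPoly`). -/
def RscalFJPoly (k b β s q w v : ℝ) : ℝ :=
  (β * v - 1) * w + k * b * q - β * v * s + k * b * q * (β * v - 1) * s - k * b ^ 2 * q ^ 2 * s * v
    + k * b * q * (s * (β * v - 1) - k + k * b * q * s * v)

lemma le_yFJ (α r : ℝ) : α ≤ yFJ α r :=
  le_add_of_nonneg_right (Real.log_nonneg (le_add_of_nonneg_right (sq_nonneg r)))

lemma yFJ_pos {α : ℝ} (hα : 0 < α) (r : ℝ) : 0 < yFJ α r :=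
  hα.trans_le (le_yFJ α r)

lemma yFJ_le_yFJ {α t r : ℝ} (ht : 0 ≤ t) (htr : t ≤ r) : yFJ α t ≤ yFJ α r := by
  unfold yFJ
  gcongr

lemma yFJ_le_mul {α : ℝ} (hα : 0 ≤ α) (r : ℝ) : yFJ α r ≤ (α + 1) * (1 + r ^ 2) := by
  have hlog := Real.log_le_sub_one_of_pos (by positivity : (0 : ℝ) < 1 + r ^ 2)
  unfold yFJ
  nlinarith [sq_nonneg r]

lemma two_mul_le_log_one_add_sq {α r : ℝ} (hr : Real.exp α ≤ r) : 2 * α ≤ Real.log (1 + r ^ 2) := by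
  have hr0 : 0 < r := (Real.exp_pos α).trans_le hr
  calc 2 * α ≤ 2 * Real.log r := by gcongr; exact (Real.le_log_iff_exp_le hr0).2 hr
    _ = Real.log (r ^ 2) := by rw [Real.log_pow]; norm_num
    _ ≤ Real.log (1 + r ^ 2) := Real.log_le_log (by positivity) (by linarith)

lemma half_rpow_le_rpow_sub_rpow {a y b : ℝ} (ha : 0 ≤ a) (hay : 2 * a ≤ y) (hb : 1 ≤ b) :
    y ^ b / 2 ≤ y ^ b - a ^ b := by
  have hy : 0 ≤ y := by linarith
  have h2 : (2 : ℝ) ≤ 2 ^ b := by simpa using Real.rpow_le_rpow_of_exponent_le one_le_two hb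
  have : 2 * a ^ b ≤ y ^ b :=
    calc 2 * a ^ b ≤ 2 ^ b * a ^ b := by gcongr
      _ = (2 * a) ^ b := (Real.mul_rpow zero_le_two ha).symm
      _ ≤ y ^ b := by gcongr
  linarith

lemma RscalFJ_eq_RscalFJPoly (n : ℕ) {α β r : ℝ} (hα : 0 < α) (hr : r ≠ 0)
    (hD : yFJ α r ^ (β + 1) - α ^ (β + 1) ≠ 0) :
    RscalFJ n α β r = α ^ β / yFJ α r ^ (β + 1) *
      RscalFJPoly ((n : ℝ) - 1) (β + 1) β (r ^ 2 / (1 + r ^ 2))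
        (yFJ α r ^ (β + 1) / (yFJ α r ^ (β + 1) - α ^ (β + 1))) (yFJ α r / (1 + r ^ 2))
        (yFJ α r)⁻¹ := by
  have hy := yFJ_pos hα r
  have h0 : yFJ α r ^ β = yFJ α r ^ (β + 1) / yFJ α r := by
    rw [Real.rpow_add_one hy.ne', mul_div_cancel_right₀ _ hy.ne']
  have h1 : yFJ α r ^ (β - 1) = yFJ α r ^ (β + 1) / yFJ α r ^ 2 := by
    rw [eq_div_iff (by positivity), ← Real.rpow_natCast, ← Real.rpow_add hy]; ring_nf
  have h2 : yFJ α r ^ (2 * β) = (yFJ α r ^ (β + 1)) ^ 2 / yFJ α r ^ 2 := by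
    rw [eq_div_iff (by positivity), ← Real.rpow_natCast, ← Real.rpow_natCast, ← Real.rpow_mul hy.le,
      ← Real.rpow_add hy]; push_cast; ring_nf
  have hY : yFJ α r ^ (β + 1) ≠ 0 := (Real.rpow_pos_of_pos hy _).ne'
  simp only [RscalFJ, RscalFJPoly]
  rw [show α + Real.log (1 + r ^ 2) = yFJ α r from rfl, h0, h1, h2]
  generalize yFJ α r ^ (β + 1) = Y at *
  have hu : 1 + r ^ 2 ≠ 0 := by positivity
  field_simp

lemma exists_abs_RscalFJPoly_le (k b β W V : ℝ) :
    ∃ K, ∀ s ∈ Icc (0 : ℝ) 1, ∀ q ∈ Icc (0 : ℝ) 2, ∀ w ∈ Icc 0 W, ∀ v ∈ Icc 0 V,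
      |RscalFJPoly k b β s q w v| ≤ K := by
  obtain ⟨K, hK⟩ := (isCompact_Icc.prod (isCompact_Icc.prod (isCompact_Icc.prod isCompact_Icc))
    ).exists_bound_of_continuousOn
      (f := fun x : ℝ × ℝ × ℝ × ℝ => RscalFJPoly k b β x.1 x.2.1 x.2.2.1 x.2.2.2)
      (by unfold RscalFJPoly; fun_prop)
  exact ⟨K, fun s hs q hq w hw v hv => hK (s, q, w, v) ⟨hs, hq, hw, hv⟩⟩

lemma abs_RscalFJ_le (n : ℕ) {α β : ℝ} (hα : 0 < α) (hβ : 0 ≤ β) :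
    ∃ C, 0 < C ∧ ∀ r, Real.exp α ≤ r → |RscalFJ n α β r| ≤ C * yFJ α r ^ (-(β + 1)) := by
  obtain ⟨K, hK⟩ := exists_abs_RscalFJPoly_le ((n : ℝ) - 1) (β + 1) β (α + 1) α⁻¹
  refine ⟨α ^ β * max K 1, by positivity, fun r hr => ?_⟩
  have hr0 : 0 < r := (Real.exp_pos α).trans_le hr
  have hy := yFJ_pos hα r
  have hY : 0 < yFJ α r ^ (β + 1) := Real.rpow_pos_of_pos hy _
  have hD : yFJ α r ^ (β + 1) / 2 ≤ yFJ α r ^ (β + 1) - α ^ (β + 1) :=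
    half_rpow_le_rpow_sub_rpow hα.le
      (by have := two_mul_le_log_one_add_sq hr; unfold yFJ; linarith) (by linarith)
  have hu : 0 < 1 + r ^ 2 := by positivity
  have hP := hK (r ^ 2 / (1 + r ^ 2)) ⟨by positivity, div_le_one_of_le₀ (by linarith) hu.le⟩
    (yFJ α r ^ (β + 1) / (yFJ α r ^ (β + 1) - α ^ (β + 1)))
      ⟨div_nonneg hY.le (by linarith), by rw [div_le_iff₀ (by linarith)]; linarith⟩
    (yFJ α r / (1 + r ^ 2)) ⟨by positivity, div_le_of_le_mul₀ hu.le (by linarith) (yFJ_le_mul hα.le r)⟩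
    (yFJ α r)⁻¹ ⟨by positivity, inv_anti₀ hα (le_yFJ α r)⟩
  rw [RscalFJ_eq_RscalFJPoly n hα hr0.ne' (by linarith), abs_mul, abs_of_pos (by positivity),
    Real.rpow_neg hy.le, div_eq_mul_inv, mul_right_comm]
  gcongr
  exact hP.trans (le_max_left K 1)

lemma continuous_inv_sqrt_one_add_sq : Continuous fun t : ℝ => (√(1 + t ^ 2))⁻¹ :=
  (continuous_const.add (continuous_pow 2)).sqrt.inv₀
    fun t => (Real.sqrt_pos.2 (by positivity : (0 : ℝ) < 1 + t ^ 2)).ne'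

lemma integral_inv_sqrt_one_add_sq (r : ℝ) :
    ∫ t in (0 : ℝ)..r, (√(1 + t ^ 2))⁻¹ = Real.arsinh r := by
  rw [intervalIntegral.integral_eq_sub_of_hasDerivAt (fun t _ => Real.hasDerivAt_arsinh t)
    (continuous_inv_sqrt_one_add_sq.intervalIntegrable 0 r), Real.arsinh_zero, sub_zero]

lemma arsinh_le_log_two_add (r : ℝ) : Real.arsinh r ≤ Real.log 2 + Real.log (1 + r ^ 2) / 2 := by
  have hs : r ≤ √(1 + r ^ 2) := Real.le_sqrt_of_sq_le (by linarith)
  rw [← Real.log_sqrt (by positivity), ← Real.log_mul two_ne_zero (by positivity),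
    Real.le_log_iff_exp_le (by positivity), Real.exp_arsinh]
  linarith

lemma rhoFJ_integrand_eq {α : ℝ} (hα : 0 < α) (β t : ℝ) :
    √((α + Real.log (1 + t ^ 2)) ^ β / (α ^ β * (1 + t ^ 2)))
      = √((yFJ α t / α) ^ β) * (√(1 + t ^ 2))⁻¹ := by
  rw [← div_div, Real.sqrt_div (by have := yFJ_pos hα t; positivity), div_eq_mul_inv,
    Real.div_rpow (yFJ_pos hα t).le hα.le]
  rfl

lemma rhoFJ_eq_integral {α : ℝ} (hα : 0 < α) (β r : ℝ) :
    rhoFJ α β r = ∫ t in (0 : ℝ)..r, √((yFJ α t / α) ^ β) * (√(1 + t ^ 2))⁻¹ := by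
  simp only [rhoFJ, rhoFJ_integrand_eq hα]

lemma continuous_yFJ (α : ℝ) : Continuous (yFJ α) := by
  unfold yFJ
  fun_prop (disch := intro; positivity)

lemma continuous_sqrt_yFJ_div_rpow {α : ℝ} (hα : 0 < α) (β : ℝ) :
    Continuous fun t => √((yFJ α t / α) ^ β) :=
  ((continuous_yFJ α).div_const α |>.rpow_const
    fun t => Or.inl (div_pos (yFJ_pos hα t) hα).ne').sqrt

lemma intervalIntegrable_rhoFJ_integrand {α : ℝ} (hα : 0 < α) (β r : ℝ) :
    IntervalIntegrable (fun t => √((yFJ α t / α) ^ β) * (√(1 + t ^ 2))⁻¹) MeasureTheory.volume 0 r :=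
  ((continuous_sqrt_yFJ_div_rpow hα β).mul continuous_inv_sqrt_one_add_sq).intervalIntegrable 0 r

lemma arsinh_le_rhoFJ {α β r : ℝ} (hα : 0 < α) (hβ : 0 ≤ β) (hr : 0 ≤ r) :
    Real.arsinh r ≤ rhoFJ α β r := by
  rw [rhoFJ_eq_integral hα, ← integral_inv_sqrt_one_add_sq]
  refine intervalIntegral.integral_mono_on hr
    (continuous_inv_sqrt_one_add_sq.intervalIntegrable 0 r)
    (intervalIntegrable_rhoFJ_integrand hα β r) fun t _ => ?_
  have : 1 ≤ √((yFJ α t / α) ^ β) :=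
    Real.one_le_sqrt.2 (Real.one_le_rpow ((one_le_div hα).2 (le_yFJ α t)) hβ)
  exact le_mul_of_one_le_left (by positivity) this

lemma rhoFJ_le_mul_arsinh {α β r : ℝ} (hα : 0 < α) (hβ : 0 ≤ β) (hr : 0 ≤ r) :
    rhoFJ α β r ≤ √((yFJ α r / α) ^ β) * Real.arsinh r := by
  rw [rhoFJ_eq_integral hα, ← integral_inv_sqrt_one_add_sq, ← intervalIntegral.integral_const_mul]
  refine intervalIntegral.integral_mono_on hr (intervalIntegrable_rhoFJ_integrand hα β r)
    ((continuous_inv_sqrt_one_add_sq.const_mul _).intervalIntegrable 0 r) fun t ht => ?_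
  have := yFJ_pos hα t
  gcongr
  exact yFJ_le_yFJ ht.1 ht.2

lemma rhoFJ_le_mul_rpow {α β : ℝ} (hα : 0 < α) (hβ : 0 ≤ β) :
    ∃ M, 0 < M ∧ ∀ r, 0 ≤ r → rhoFJ α β r ≤ M * yFJ α r ^ ((β + 2) / 2) := by
  refine ⟨(1 + α⁻¹) / α ^ (β / 2), by positivity, fun r hr => ?_⟩
  have hy := yFJ_pos hα r
  have harsinh : Real.arsinh r ≤ (1 + α⁻¹) * yFJ α r :=
    calc Real.arsinh r ≤ Real.log 2 + Real.log (1 + r ^ 2) / 2 := arsinh_le_log_two_add r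
      _ ≤ yFJ α r + 1 := by
          have := Real.log_nonneg (le_add_of_nonneg_right (sq_nonneg r))
          unfold yFJ; linarith [Real.log_two_lt_d9]
      _ ≤ yFJ α r + yFJ α r / α := by gcongr; exact (one_le_div hα).2 (le_yFJ α r)
      _ = (1 + α⁻¹) * yFJ α r := by ring
  calc rhoFJ α β r ≤ √((yFJ α r / α) ^ β) * ((1 + α⁻¹) * yFJ α r) :=
        (rhoFJ_le_mul_arsinh hα hβ hr).trans (by gcongr)
    _ = (1 + α⁻¹) / α ^ (β / 2) * yFJ α r ^ ((β + 2) / 2) := by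
        rw [Real.sqrt_eq_rpow, ← Real.rpow_mul (by positivity), Real.div_rpow hy.le hα.le,
          show (β + 2) / 2 = β * (1 / 2) + 1 by ring, Real.rpow_add_one hy.ne']
        ring_nf

lemma rpow_neg_le_of_le_mul_rpow {ρ c Y p e : ℝ} (hρ : 0 < ρ) (hc : 0 < c) (hY : 0 ≤ Y)
    (he : 0 ≤ e) (h : ρ ≤ c * Y ^ p) : Y ^ (-(p * e)) ≤ c ^ e * ρ ^ (-e) := by
  have hce : 0 < c ^ e := Real.rpow_pos_of_pos hc e
  have := Real.rpow_le_rpow_of_nonpos hρ h (neg_nonpos.2 he)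
  rw [Real.mul_rpow hc.le (Real.rpow_nonneg hY p), ← Real.rpow_mul hY, Real.rpow_neg hc.le] at this
  calc Y ^ (-(p * e)) = c ^ e * ((c ^ e)⁻¹ * Y ^ (p * -e)) := by
        rw [mul_neg, ← mul_assoc, mul_inv_cancel₀ hce.ne', one_mul]
    _ ≤ c ^ e * ρ ^ (-e) := by gcongr

theorem stmt_18_general (n : ℕ) (α β : ℝ) (hβ : 0 ≤ β) (hαβ : β < α) :
    ∃ C r₀ : ℝ, 0 < C ∧ 1 < r₀ ∧
      ∀ r : ℝ, r₀ ≤ r →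
        |RscalFJ n α β r| ≤ C * rhoFJ α β r ^ (-(2 * (β + 1)) / (β + 2)) := by
  have hα : 0 < α := hβ.trans_lt hαβ
  obtain ⟨C, hC, hR⟩ := abs_RscalFJ_le n hα hβ
  obtain ⟨M, hM, hρ⟩ := rhoFJ_le_mul_rpow hα hβ
  set e := 2 * (β + 1) / (β + 2) with he
  refine ⟨C * M ^ e, Real.exp α + 1, by positivity, by linarith [Real.exp_pos α], fun r hr => ?_⟩
  have hr0 : 0 < r := by linarith [Real.exp_pos α]
  have hρ0 : 0 < rhoFJ α β r :=
    (Real.arsinh_pos_iff.2 hr0).trans_le (arsinh_le_rhoFJ hα hβ hr0.le)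
  have key := rpow_neg_le_of_le_mul_rpow hρ0 hM (yFJ_pos hα r).le (e := e) (by positivity)
    (hρ r hr0.le)
  rw [show (β + 2) / 2 * e = β + 1 by rw [he]; field_simp] at key
  calc |RscalFJ n α β r| ≤ C * yFJ α r ^ (-(β + 1)) := hR r (by linarith)
    _ ≤ C * (M ^ e * rhoFJ α β r ^ (-e)) := by gcongr
    _ = C * M ^ e * rhoFJ α β r ^ (-(2 * (β + 1)) / (β + 2)) := by rw [neg_div]; ring

theorem stmt_18 (n : ℕ) (hn : 2 ≤ n) (α β : ℝ) (hβ : 0 ≤ β) (hαβ : β < α) :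
    ∃ C r₀ : ℝ, 0 < C ∧ 1 < r₀ ∧
      ∀ r : ℝ, r₀ ≤ r →
        |RscalFJ n α β r| ≤ C * rhoFJ α β r ^ (-(2 * (β + 1)) / (β + 2)) :=
  stmt_18_general n α β hβ hαβ
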